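/- arXiv:1704.04215 — 4 statements merged into one kernel-verified Lean document; each statement's English description precedes it below -/
import Mathlib

section
/- Let x = (N_{f_{v+1}} → X₁^{f₁}…X_d^{f_d} • X_{d+1}^{f_{d+1}}…X_v^{f_v}, i, j, ρ) be a parameterized item with the dot before position d+1 (so v ≥ d+1) and ρ ∈ ⟨f₁,…,f_{d+1}⟩. Then for every γ ∈ Φ there exists an ordinary item x' ∈ ⟦x⟧ of the form (N^{ρ₀}_β → X^{ρ₁}_{ρ₂}…X^{ρ_{2d−1}}_{ρ_{2d}} • X^{ρ_{2d+1}}_γ w, i, j) for some β ∈ Φ and some string w of induced symbols. -/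
/-- Hull membership: `ρ` has length `2*u` and for each `i < u`, the partial function
`f i` (modeling `f_{i+1} : Φ^(2i+1) ⇀ Φ`) is defined at the first `2i+1` entries of `ρ`
with value `ρ_{2i+1}`. -/
def InHull {Φ : Type} (f : ℕ → List Φ → Option Φ) (u : ℕ) (ρ : List Φ) : Prop :=
  ρ.length = 2 * u ∧ ∀ i < u, ρ[2 * i + 1]? = f i (ρ.take (2 * i + 1))

/-- A parameterized rule `N_{f_{k+1}} → X₁^{f₁} … X_k^{f_k}`; symbols are nonterminals
(`Sum.inl`) or terminals (`Sum.inr`), and `f i` models the partial function `f_{i+1}`. -/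
structure ParamRule (NT TM Φ : Type) where
  lhs : NT
  rhs : List (NT ⊕ TM)
  f : ℕ → List Φ → Option Φ

/-- A rule of the induced (ordinary) grammar: `lhs^inP_outP → rhs [⊥]`, where the
trailing failure symbol `⊥` is recorded by the flag `fail`, and `isTop` marks the
special rules `⊤ → S^{φstart}_β` of the induced grammar. -/
structure IndRule (NT TM Φ : Type) where
  isTop : Bool
  lhs : NT
  inP : Φ
  outP : Φ
  rhs : List ((NT ⊕ TM) × Φ × Φ)
  fail : Bool

/-- `q` is one of the rules induced by the parameterized rule `r`. -/
def InducedBy {NT TM Φ : Type} (r : ParamRule NT TM Φ) (q : IndRule NT TM Φ) : Prop :=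
  q.isTop = false ∧ q.lhs = r.lhs ∧
  ((q.fail = false ∧ q.rhs.length = r.rhs.length ∧
      ∃ ρ : List Φ, InHull r.f (r.rhs.length + 1) ρ ∧
        ρ[0]? = some q.inP ∧ ρ[2 * r.rhs.length + 1]? = some q.outP ∧
        ∀ i < r.rhs.length, ∃ X a b,
          r.rhs[i]? = some X ∧ ρ[2 * i + 1]? = some a ∧
          ρ[2 * i + 2]? = some b ∧ q.rhs[i]? = some (X, a, b)) ∨
   (q.fail = true ∧ ∃ h, 1 ≤ h ∧ h ≤ r.rhs.length ∧ q.rhs.length = h ∧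
      ∃ ρ : List Φ, InHull r.f h ρ ∧ ρ[0]? = some q.inP ∧
        (∀ i, i + 1 < h → ∃ X a b,
          r.rhs[i]? = some X ∧ ρ[2 * i + 1]? = some a ∧
          ρ[2 * i + 2]? = some b ∧ q.rhs[i]? = some (X, a, b)) ∧
        ∃ X a βh, r.rhs[h - 1]? = some X ∧ ρ[2 * h - 1]? = some a ∧
          q.rhs[h - 1]? = some (X, a, βh) ∧ r.f h (ρ ++ [βh]) = none))

/-- A parameterized (PELLA) item `(r, d, i, j, ρ)`. -/
structure PItem (NT TM Φ : Type) where
  r : ParamRule NT TM Φ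
  d : ℕ
  i : ℕ
  j : ℕ
  ρ : List Φ

/-- An ordinary (ELLA) Earley item `(q, d, i, j)` of the induced grammar. -/
structure EItem (NT TM Φ : Type) where
  rule : IndRule NT TM Φ
  d : ℕ
  i : ℕ
  j : ℕ

/-- The invariant demanded of parameterized items: `d ≤ k` and `ρ ∈ ⟨f₁,…,f_{d+1}⟩`. -/
def PItem.Valid {NT TM Φ : Type} (x : PItem NT TM Φ) : Prop :=
  x.d ≤ x.r.rhs.length ∧ InHull x.r.f (x.d + 1) x.ρ

/-- `ρ` is the length-`2*(d+1)` prefix of the parameter sequence of the induced rule `q`. -/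
def ParamsMatch {NT TM Φ : Type} (q : IndRule NT TM Φ) (d : ℕ) (ρ : List Φ) : Prop :=
  ρ.length = 2 * (d + 1) ∧ ρ[0]? = some q.inP ∧
  (∀ i < d, ∃ X a b, q.rhs[i]? = some (X, a, b) ∧
      ρ[2 * i + 1]? = some a ∧ ρ[2 * i + 2]? = some b) ∧
  ((∃ X a b, q.rhs[d]? = some (X, a, b) ∧ ρ[2 * d + 1]? = some a) ∨
   (d = q.rhs.length ∧ q.fail = false ∧ ρ[2 * d + 1]? = some q.outP))

/-- The ordinary item `y` belongs to the induced item set `⟦x⟧` of the parameterized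
item `x`. -/
def MemInduced {NT TM Φ : Type} (x : PItem NT TM Φ) (y : EItem NT TM Φ) : Prop :=
  InducedBy x.r y.rule ∧ y.d = x.d ∧ y.i = x.i ∧ y.j = x.j ∧
  (y.rule.fail = true → x.d + 1 ≤ y.rule.rhs.length) ∧
  ParamsMatch y.rule x.d x.ρ

/-!
Extend `ρ` by `γ` and keep extending the parameter sequence, with arbitrary in-parameters, as long
as the next `f` is defined. Either the hull `⟨f₁,…,f_{k+1}⟩` is completed, which gives an ordinary
induced rule, or some `f_{h+1}` is undefined, which gives a `⊥`-rule. Both rules start with the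
parameters `ργ`, so the item with the dot at `d` over either of them lies in `⟦x⟧`.
-/

theorem List.IsPrefix.getElem?_eq {α : Type*} {l l' : List α} (h : l <+: l') {n : ℕ}
    (hn : n < l.length) : l[n]? = l'[n]? := by
  obtain ⟨t, rfl⟩ := h
  exact (List.getElem?_append_left hn).symm

def List.pairs {α : Type*} : List α → List (α × α)
  | a :: b :: l => (a, b) :: pairs l
  | [_] => []
  | [] => []

theorem List.length_pairs {α : Type*} (l : List α) : l.pairs.length = l.length / 2 := by
  fun_induction List.pairs l with
  | case1 a b l ih => simp only [List.length_cons, ih]; omega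
  | case2 | case3 => simp

theorem List.getElem?_pairs_eq_some {α : Type*} {l : List α} {i : ℕ} {p : α × α} :
    l.pairs[i]? = some p ↔ l[2 * i]? = some p.1 ∧ l[2 * i + 1]? = some p.2 := by
  fun_induction List.pairs l generalizing i with
  | case1 a b l ih =>
    cases i with
    | zero => simp [Prod.ext_iff, eq_comm]
    | succ i => simpa [Nat.mul_succ] using ih
  | case2 | case3 => simp

section InducedRhs

variable {α Φ : Type*}

/-- `X₁^{σ₁}_{σ₂} X₂^{σ₃}_{σ₄} …` for `rhs = X₁ X₂ …`, as long as both `rhs` and `σ` last. -/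
def inducedRhs (rhs : List α) (σ : List Φ) : List (α × Φ × Φ) :=
  rhs.zip (σ.tail.pairs)

theorem length_inducedRhs (rhs : List α) (σ : List Φ) :
    (inducedRhs rhs σ).length = min rhs.length ((σ.length - 1) / 2) := by
  simp [inducedRhs, List.length_pairs]

theorem getElem?_inducedRhs_eq_some {rhs : List α} {σ : List Φ} {i : ℕ} {X : α} {a b : Φ} :
    (inducedRhs rhs σ)[i]? = some (X, a, b) ↔
      rhs[i]? = some X ∧ σ[2 * i + 1]? = some a ∧ σ[2 * i + 2]? = some b := by
  simp [inducedRhs, List.getElem?_zip_eq_some, List.getElem?_pairs_eq_some]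

theorem exists_getElem?_inducedRhs {rhs : List α} {ρ σ : List Φ} (hpre : ρ <+: σ) {i : ℕ}
    (hi : i < rhs.length) (hρ : 2 * i + 2 < ρ.length) :
    ∃ X a b, rhs[i]? = some X ∧ ρ[2 * i + 1]? = some a ∧ ρ[2 * i + 2]? = some b ∧
      (inducedRhs rhs σ)[i]? = some (X, a, b) := by
  refine ⟨rhs[i], ρ[2 * i + 1], ρ[2 * i + 2], by simp, by simp, by simp, ?_⟩
  rw [getElem?_inducedRhs_eq_some, ← hpre.getElem?_eq (by omega), ← hpre.getElem?_eq hρ]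
  simp

theorem exists_getElem?_inducedRhs_of_append_prefix {rhs : List α} {ρ σ : List Φ} {γ : Φ}
    (hpre : ρ ++ [γ] <+: σ) {d : ℕ} (hd : d < rhs.length) (hρ : ρ.length = 2 * d + 2) :
    ∃ X a, rhs[d]? = some X ∧ ρ[2 * d + 1]? = some a ∧
      (inducedRhs rhs σ)[d]? = some (X, a, γ) := by
  obtain ⟨X, a, b, hX, ha, hb, hXab⟩ := exists_getElem?_inducedRhs hpre hd
    (by simp only [List.length_append, List.length_singleton]; omega)
  rw [List.getElem?_append_left (by omega)] at ha
  obtain rfl : b = γ := by simpa [← hρ] using hb.symm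
  exact ⟨X, a, hX, ha, hXab⟩

end InducedRhs

section InHull

variable {Φ : Type} {f : ℕ → List Φ → Option Φ}

theorem InHull.succ {u : ℕ} {ρ : List Φ} (h : InHull f u ρ) {β a : Φ}
    (hβ : f u (ρ ++ [β]) = some a) : InHull f (u + 1) (ρ ++ [β, a]) := by
  obtain ⟨hlen, hval⟩ := h
  refine ⟨by simp only [List.length_append, List.length_cons, List.length_nil, hlen]; omega,
    fun i hi => ?_⟩
  rcases Nat.lt_succ_iff_lt_or_eq.mp hi with hi | rfl
  · rw [List.getElem?_append_left (by omega), List.take_append_of_le_length (by omega)]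
    exact hval i hi
  · rw [show ρ ++ [β, a] = ρ ++ [β] ++ [a] by simp, List.take_left' (by simp only [List.length_append, List.length_singleton]; omega), hβ]
    simp [hlen]

/-- The parameter sequences `σ₀σ₁…` of the rules induced by a rule with `k` right-hand symbols;
in a `⊥`-rule, `σ` ends with the out-parameter of the symbol followed by `⊥`. -/
def IsInducedParams (f : ℕ → List Φ → Option Φ) (k : ℕ) (σ : List Φ) : Prop :=
  InHull f (k + 1) σ ∨
    ∃ h τ β, 1 ≤ h ∧ h ≤ k ∧ σ = τ ++ [β] ∧ InHull f h τ ∧ f h σ = none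

theorem InHull.exists_isInducedParams {u k : ℕ} {ρ : List Φ} (hρ : InHull f u ρ) (hu : 1 ≤ u)
    (huk : u ≤ k) (γ : Φ) : ∃ σ, ρ ++ [γ] <+: σ ∧ IsInducedParams f k σ := by
  cases hγ : f u (ρ ++ [γ]) with
  | none => exact ⟨ρ ++ [γ], List.prefix_refl _, Or.inr ⟨u, ρ, γ, hu, huk, rfl, hρ, hγ⟩⟩
  | some a =>
    have hpre : ρ ++ [γ] <+: ρ ++ [γ, a] := ⟨[a], by simp⟩
    rcases huk.lt_or_eq with huk | rfl
    · obtain ⟨σ, hσ, hparams⟩ := (hρ.succ hγ).exists_isInducedParams (by omega) huk γ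
      exact ⟨σ, hpre.trans ((List.prefix_append _ _).trans hσ), hparams⟩
    · exact ⟨ρ ++ [γ, a], hpre, Or.inl (hρ.succ hγ)⟩
termination_by k - u

end InHull

section InducedItem

variable {NT TM Φ : Type}

theorem inducedBy_of_inHull {r : ParamRule NT TM Φ} {σ : List Φ}
    (hσ : InHull r.f (r.rhs.length + 1) σ) {p o : Φ} (hp : σ[0]? = some p)
    (ho : σ[2 * r.rhs.length + 1]? = some o) :
    InducedBy r ⟨false, r.lhs, p, o, inducedRhs r.rhs σ, false⟩ := by
  have hlen := hσ.1
  refine ⟨rfl, rfl, Or.inl ⟨rfl, ?_, σ, hσ, hp, ho, fun i hi =>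
    exists_getElem?_inducedRhs (List.prefix_refl σ) hi (by omega)⟩⟩
  rw [length_inducedRhs, hlen]
  omega

theorem inducedBy_of_eq_none {r : ParamRule NT TM Φ} {h : ℕ} (h1 : 1 ≤ h)
    (hk : h ≤ r.rhs.length) {τ : List Φ} (hτ : InHull r.f h τ) {β p o : Φ}
    (hp : τ[0]? = some p) (hβ : r.f h (τ ++ [β]) = none) :
    InducedBy r ⟨false, r.lhs, p, o, inducedRhs r.rhs (τ ++ [β]), true⟩ := by
  have hlen := hτ.1
  obtain ⟨X, a, hX, ha, hXa⟩ := exists_getElem?_inducedRhs_of_append_prefix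
    (List.prefix_refl (τ ++ [β])) (rhs := r.rhs) (d := h - 1) (by omega) (by omega)
  refine ⟨rfl, rfl, Or.inr ⟨rfl, h, h1, hk, ?_, τ, hτ, hp, fun i hi =>
    exists_getElem?_inducedRhs (List.prefix_append τ [β]) (by omega) (by omega),
    X, a, β, hX, ?_, hXa, hβ⟩⟩
  · simp only [length_inducedRhs, List.length_append, List.length_singleton, hlen]
    omega
  · rwa [show 2 * h - 1 = 2 * (h - 1) + 1 by omega]

theorem IsInducedParams.exists_inducedBy {r : ParamRule NT TM Φ} {σ : List Φ}
    (hσ : IsInducedParams r.f r.rhs.length σ) :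
    ∃ q : IndRule NT TM Φ, InducedBy r q ∧ q.rhs = inducedRhs r.rhs σ ∧ σ[0]? = some q.inP := by
  rcases hσ with hσ | ⟨h, τ, β, h1, hk, rfl, hτ, hβ⟩
  · have hlen := hσ.1
    exact ⟨_, inducedBy_of_inHull hσ (p := σ[0]) (o := σ[2 * r.rhs.length + 1]) (by simp)
      (by simp), rfl, by simp⟩
  · have hlen := hτ.1
    exact ⟨_, inducedBy_of_eq_none h1 hk hτ (p := τ[0]) (o := β) (by simp) hβ, rfl,
      by rw [List.getElem?_append_left (by omega)]; simp⟩

theorem paramsMatch_of_append_prefix {q : IndRule NT TM Φ} {rhs : List (NT ⊕ TM)}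
    {ρ σ : List Φ} {γ : Φ} {d : ℕ} (hq : q.rhs = inducedRhs rhs σ) (hin : σ[0]? = some q.inP)
    (hpre : ρ ++ [γ] <+: σ) (hρ : ρ.length = 2 * (d + 1)) (hd : d < rhs.length) :
    ParamsMatch q d ρ := by
  obtain ⟨X, a, -, ha, hXa⟩ := exists_getElem?_inducedRhs_of_append_prefix hpre hd (by omega)
  have hρσ : ρ <+: σ := (List.prefix_append ρ [γ]).trans hpre
  refine ⟨hρ, by rwa [hρσ.getElem?_eq (by omega)], fun i hi => ?_,
    Or.inl ⟨X, a, γ, hq ▸ hXa, ha⟩⟩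
  obtain ⟨X, a, b, -, ha, hb, hXab⟩ :=
    exists_getElem?_inducedRhs hρσ (rhs := rhs) (i := i) (by omega) (by omega)
  exact ⟨X, a, b, hq ▸ hXab, ha, hb⟩

end InducedItem

theorem choose_induced_item_general {NT TM Φ : Type}
    (x : PItem NT TM Φ) (hx : x.Valid) (hdot : x.d + 1 ≤ x.r.rhs.length) (γ : Φ) :
    ∃ y : EItem NT TM Φ, MemInduced x y ∧
      ∃ X a, x.r.rhs[x.d]? = some X ∧ x.ρ[2 * x.d + 1]? = some a ∧
        y.rule.rhs[x.d]? = some (X, a, γ) := by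
  obtain ⟨σ, hpre, hσ⟩ := hx.2.exists_isInducedParams (Nat.succ_pos _) hdot γ
  obtain ⟨q, hq, hrhs, hin⟩ := hσ.exists_inducedBy
  have hρ : x.ρ.length = 2 * (x.d + 1) := hx.2.1
  have hlen : x.d + 1 ≤ q.rhs.length := by
    have hσ_len := hpre.length_le
    simp only [List.length_append, List.length_singleton] at hσ_len
    rw [hrhs, length_inducedRhs]
    omega
  refine ⟨⟨q, x.d, x.i, x.j⟩, ⟨hq, rfl, rfl, rfl, fun _ => hlen,
    paramsMatch_of_append_prefix hrhs hin hpre hρ hdot⟩, ?_⟩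
  rw [hrhs]
  exact exists_getElem?_inducedRhs_of_append_prefix hpre hdot (by omega)

/-- If the dot of the parameterized item `x` is before position `d+1`
(so `v ≥ d + 1`), then for every `γ ∈ Φ` there is an induced item `x' ∈ ⟦x⟧` whose
symbol after the dot is `X^{ρ_{2d+1}}_γ`. -/
theorem choose_induced_item {NT TM Φ : Type} [Nonempty Φ]
    (x : PItem NT TM Φ) (hx : x.Valid) (hdot : x.d + 1 ≤ x.r.rhs.length) (γ : Φ) :
    ∃ y : EItem NT TM Φ, MemInduced x y ∧
      ∃ X a, x.r.rhs[x.d]? = some X ∧ x.ρ[2 * x.d + 1]? = some a ∧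
        y.rule.rhs[x.d]? = some (X, a, γ) :=
  choose_induced_item_general x hx hdot γ
end

section
/- For every induced rule (N^α_β → w) ∈ ⟦R⟧ and every d with 0 ≤ d ≤ |w| (if w does not end with ⊥) or 0 ≤ d ≤ |w|−2 (if w ends with ⊥), and any indices 0 ≤ i ≤ j ≤ n, there exists a parameterized item x = (N_{f_{k+1}} → X₁^{f₁}…X_k^{f_k}, d, i, j, ρ) satisfying the hull invariant such that (N^α_β → w, d, i, j) ∈ ⟦x⟧. -/
/- The item is built from the rule `r ∈ R` inducing `q`: its parameter sequence is the
prefix of length `2 (d + 1)` of the one witnessing `InducedBy r q`. Prefixes of hull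
members are hull members, and every condition of `ParamsMatch q d` reads the sequence only
below position `2 (d + 1)`, so it transfers from the full sequence to the prefix. -/

theorem InHull.take {Φ : Type} {f : ℕ → List Φ → Option Φ} {u v : ℕ} {ρ : List Φ}
    (h : InHull f u ρ) (hv : v ≤ u) : InHull f v (ρ.take (2 * v)) := by
  obtain ⟨hlen, hf⟩ := h
  refine ⟨by rw [List.length_take, hlen]; omega, fun i hi => ?_⟩
  rw [List.getElem?_take_of_lt (by omega), List.take_take, min_eq_left (by omega)]
  exact hf i (by omega)

theorem paramsMatch_take {NT TM Φ : Type} {q : IndRule NT TM Φ} {d : ℕ} {ρ : List Φ}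
    (hlen : 2 * (d + 1) ≤ ρ.length) (hin : ρ[0]? = some q.inP)
    (hbefore : ∀ m < d, ∃ X a b, q.rhs[m]? = some (X, a, b) ∧
      ρ[2 * m + 1]? = some a ∧ ρ[2 * m + 2]? = some b)
    (hat : (∃ X a b, q.rhs[d]? = some (X, a, b) ∧ ρ[2 * d + 1]? = some a) ∨
      (d = q.rhs.length ∧ q.fail = false ∧ ρ[2 * d + 1]? = some q.outP)) :
    ParamsMatch q d (ρ.take (2 * (d + 1))) := by
  have htake : ∀ k < 2 * (d + 1), (ρ.take (2 * (d + 1)))[k]? = ρ[k]? :=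
    fun k hk => List.getElem?_take_of_lt hk
  refine ⟨by rw [List.length_take]; omega, by rw [htake 0 (by omega)]; exact hin,
    fun m hm => ?_, ?_⟩
  · obtain ⟨X, a, b, hq, ha, hb⟩ := hbefore m hm
    exact ⟨X, a, b, hq, by rwa [htake _ (by omega)], by rwa [htake _ (by omega)]⟩
  · rw [htake _ (by omega)]
    exact hat

theorem InducedBy.exists_inHull_paramsMatch {NT TM Φ : Type} {r : ParamRule NT TM Φ}
    {q : IndRule NT TM Φ} {d : ℕ} (hind : InducedBy r q)
    (hd₁ : q.fail = false → d ≤ q.rhs.length) (hd₂ : q.fail = true → d + 1 ≤ q.rhs.length) :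
    d ≤ r.rhs.length ∧ ∃ ρ, InHull r.f (d + 1) ρ ∧ ParamsMatch q d ρ := by
  obtain ⟨-, -, ⟨hfail, hlen, ρ, hhull, hin, hout, hall⟩ |
    ⟨hfail, h, -, hh, hqlen, ρ, hhull, hin, hall, X, a, βh, -, ha, hlast, -⟩⟩ := hind
  · have hdk : d ≤ r.rhs.length := hlen ▸ hd₁ hfail
    refine ⟨hdk, _, hhull.take (by omega),
      paramsMatch_take (by rw [hhull.1]; omega) hin (fun m hm => ?_) ?_⟩
    · obtain ⟨X, a, b, -, ha, hb, hq⟩ := hall m (by omega)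
      exact ⟨X, a, b, hq, ha, hb⟩
    · rcases hdk.lt_or_eq with hlt | rfl
      · obtain ⟨X, a, b, -, ha, -, hq⟩ := hall d hlt
        exact Or.inl ⟨X, a, b, hq, ha⟩
      · exact Or.inr ⟨hlen.symm, hfail, hout⟩
  · have hdh : d + 1 ≤ h := hqlen ▸ hd₂ hfail
    refine ⟨by omega, _, hhull.take hdh,
      paramsMatch_take (by rw [hhull.1]; omega) hin (fun m hm => ?_) (Or.inl ?_)⟩
    · obtain ⟨X, a, b, -, ha, hb, hq⟩ := hall m (by omega)
      exact ⟨X, a, b, hq, ha, hb⟩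
    · rcases hdh.lt_or_eq with hlt | rfl
      · obtain ⟨X, a, b, -, ha, -, hq⟩ := hall d (by omega)
        exact ⟨X, a, b, hq, ha⟩
      · exact ⟨X, a, βh, hlast, by rwa [show 2 * d + 1 = 2 * (d + 1) - 1 by omega]⟩

theorem find_parameterized_item_general {NT TM Φ : Type}
    (R : Set (ParamRule NT TM Φ)) (q : IndRule NT TM Φ)
    (hq : ∃ r ∈ R, InducedBy r q)
    (d i j : ℕ)
    (hd₁ : q.fail = false → d ≤ q.rhs.length)
    (hd₂ : q.fail = true → d + 1 ≤ q.rhs.length) :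
    ∃ x : PItem NT TM Φ, x.r ∈ R ∧ x.d = d ∧ x.i = i ∧ x.j = j ∧ x.Valid ∧
      MemInduced x ⟨q, d, i, j⟩ := by
  obtain ⟨r, hr, hind⟩ := hq
  obtain ⟨hdk, ρ, hhull, hmatch⟩ := hind.exists_inHull_paramsMatch hd₁ hd₂
  exact ⟨⟨r, d, i, j, ρ⟩, hr, rfl, rfl, rfl, ⟨hdk, hhull⟩, hind, rfl, rfl, rfl, hd₂, hmatch⟩

/-- For every rule `q` induced by some parameterized rule of `R`, every
admissible dot position `d` (`d ≤ |w|` if `q` does not end in `⊥`, `d ≤ |w| - 2`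
otherwise, where `|w| = q.rhs.length` resp. `q.rhs.length + 1`), and any indices
`i ≤ j ≤ n`, there is a parameterized item `x` over a rule of `R` satisfying the hull
invariant with `(q, d, i, j) ∈ ⟦x⟧`. -/
theorem find_parameterized_item {NT TM Φ : Type}
    (R : Set (ParamRule NT TM Φ)) (q : IndRule NT TM Φ)
    (hq : ∃ r ∈ R, InducedBy r q)
    (d i j n : ℕ)
    (hd₁ : q.fail = false → d ≤ q.rhs.length)
    (hd₂ : q.fail = true → d + 1 ≤ q.rhs.length)
    (hij : i ≤ j) (hjn : j ≤ n) :
    ∃ x : PItem NT TM Φ, x.r ∈ R ∧ x.d = d ∧ x.i = i ∧ x.j = j ∧ x.Valid ∧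
      MemInduced x ⟨q, d, i, j⟩ :=
  find_parameterized_item_general R q hq d i j hd₁ hd₂
end

section
/- If I ∼ I' then Complete k I ∼ Complete' k I', where Complete advances the dot of an item over a nonterminal M when a completed item for M with matching input parameter is present, records M's output parameter, and requires the next partial function to be defined on the extended parameter sequence; Complete' is the standard Earley completion on the induced grammar. -/
/-- `⟦I⟧`, the induced item set of a set of parameterized items. -/
def InducedSet {NT TM Φ : Type} (I : Set (PItem NT TM Φ)) : Set (EItem NT TM Φ) :=
  { y | ∃ x ∈ I, MemInduced x y }

/-- `NormItems` removes items whose left-hand side is `⊤` or whose dot is immediately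
before `⊥`. -/
def NormItems {NT TM Φ : Type} (I' : Set (EItem NT TM Φ)) : Set (EItem NT TM Φ) :=
  { y ∈ I' | y.rule.isTop = false ∧ ¬(y.rule.fail = true ∧ y.d = y.rule.rhs.length) }

/-- The correspondence `I ∼ I'`, namely `⟦I⟧ = Norm(I')`. -/
def Sim {NT TM Φ : Type} (I : Set (PItem NT TM Φ)) (I' : Set (EItem NT TM Φ)) : Prop :=
  InducedSet I = NormItems I'

/-- PELLA completion at position `k`. -/
def Complete {NT TM Φ : Type} (k : ℕ) (I : Set (PItem NT TM Φ)) :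
    Set (PItem NT TM Φ) :=
  I ∪ { z | ∃ x ∈ I, ∃ y ∈ I, ∃ M : NT,
      x.r.rhs[x.d]? = some (Sum.inl M) ∧ y.r.lhs = M ∧
      y.d = y.r.rhs.length ∧ y.i = x.j ∧ y.j = k ∧
      x.ρ[2 * x.d + 1]? = y.ρ[0]? ∧
      ∃ ξout b : Φ, y.ρ[2 * y.d + 1]? = some ξout ∧
        x.r.f (x.d + 1) (x.ρ ++ [ξout]) = some b ∧
        z = ⟨x.r, x.d + 1, x.i, k, (x.ρ ++ [ξout]) ++ [b]⟩ }

/-- Standard Earley completion at position `k` on the induced grammar. -/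
def Complete' {NT TM Φ : Type} (k : ℕ) (I' : Set (EItem NT TM Φ)) :
    Set (EItem NT TM Φ) :=
  I' ∪ { z | ∃ y ∈ I', ∃ c ∈ I', ∃ (M : NT) (α β : Φ),
      y.rule.rhs[y.d]? = some (Sum.inl M, α, β) ∧
      c.rule.isTop = false ∧ c.rule.fail = false ∧ c.rule.lhs = M ∧
      c.rule.inP = α ∧ c.rule.outP = β ∧ c.d = c.rule.rhs.length ∧
      c.i = y.j ∧ c.j = k ∧ z = ⟨y.rule, y.d + 1, y.i, k⟩ }

/-!
Every induced rule `q` carries its parameter sequence `q.params = φ₀ α₁ β₁ … α_k β_k [φ_out]`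
(no `φ_out` when `q` ends in `⊥`). An item `(r, d, i, j, ρ)` induces `(q, d, i, j)` exactly
when `ρ` is the prefix of length `2d + 2` of `q.params`, and `q.params` lies in the hull of
`r` as far as it reaches. So moving the dot of `(q, d, i, j)` over `X^α_β` is mirrored by
extending `ρ` with `β` and `f_{d+2}(ρ β)`, which is defined because `q.params` continues past
`β`. Conversely a completion step on parameterized items is mirrored by the items induced by
its two antecedents, the completed one being induced through its full parameter sequence.
-/

theorem List.ext_getElem?_of_parity {α : Type*} {l l' : List α} (hlen : l.length = l'.length)
    (h0 : l[0]? = l'[0]?) (hodd : ∀ i, 2 * i + 1 < l.length → l[2 * i + 1]? = l'[2 * i + 1]?)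
    (heven : ∀ i, 2 * i + 2 < l.length → l[2 * i + 2]? = l'[2 * i + 2]?) : l = l' := by
  refine List.ext_getElem? fun n => ?_
  by_cases hn : n < l.length
  · obtain ⟨m, rfl | rfl⟩ := Nat.even_or_odd' n
    · rcases m with _ | m
      · exact h0
      · exact heven m (by omega)
    · exact hodd m hn
  · rw [List.getElem?_eq_none (by omega), List.getElem?_eq_none (by omega)]

theorem List.length_flatMap_pair {α β : Type*} (l : List α) (f g : α → β) :
    (l.flatMap fun s => [f s, g s]).length = 2 * l.length := by
  induction l with
  | nil => rfl
  | cons a l ih => simp [ih]; ring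

theorem List.getElem?_flatMap_pair {α β : Type*} (l : List α) (f g : α → β) (i : ℕ) :
    (l.flatMap fun s => [f s, g s])[2 * i]? = l[i]?.map f ∧
      (l.flatMap fun s => [f s, g s])[2 * i + 1]? = l[i]?.map g := by
  induction l generalizing i with
  | nil => simp
  | cons a l ih =>
    rcases i with _ | i
    · simp
    · simpa [Nat.mul_succ] using ih i

namespace IndRule

variable {NT TM Φ : Type}

def params (q : IndRule NT TM Φ) : List Φ :=
  q.inP :: (q.rhs.flatMap (fun s => [s.2.1, s.2.2]) ++ if q.fail then [] else [q.outP])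

theorem length_params (q : IndRule NT TM Φ) :
    q.params.length = 2 * q.rhs.length + if q.fail then 1 else 2 := by
  cases hf : q.fail <;> simp [params, hf] <;> ring

theorem params_getElem?_zero (q : IndRule NT TM Φ) : q.params[0]? = some q.inP := rfl

theorem params_getElem?_of_rhs {q : IndRule NT TM Φ} {i : ℕ} {X : NT ⊕ TM} {a b : Φ}
    (h : q.rhs[i]? = some (X, a, b)) :
    q.params[2 * i + 1]? = some a ∧ q.params[2 * i + 2]? = some b := by
  have hi : i < q.rhs.length := (List.getElem?_eq_some_iff.1 h).1
  obtain ⟨ha, hb⟩ := List.getElem?_flatMap_pair q.rhs (fun s => s.2.1) (fun s => s.2.2) i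
  have hlen := List.length_flatMap_pair q.rhs (fun s => s.2.1) (fun s => s.2.2)
  simp only [params, List.getElem?_cons_succ, show 2 * i + 2 = 2 * i + 1 + 1 by ring]
  rw [List.getElem?_append_left (by omega), List.getElem?_append_left (by omega), ha, hb, h]
  simp

theorem params_getElem?_outP {q : IndRule NT TM Φ} (h : q.fail = false) :
    q.params[2 * q.rhs.length + 1]? = some q.outP := by
  have hlen := List.length_flatMap_pair q.rhs (fun s => s.2.1) (fun s => s.2.2)
  simp only [params, h, List.getElem?_cons_succ]
  rw [List.getElem?_append_right (by omega), hlen]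
  simp

end IndRule

section

variable {NT TM Φ : Type}

theorem ParamsMatch.eq_take_params {q : IndRule NT TM Φ} {d : ℕ} {ρ : List Φ}
    (h : ParamsMatch q d ρ) :
    2 * d + 2 ≤ q.params.length ∧ ρ = q.params.take (2 * d + 2) := by
  have hlenP := q.length_params
  obtain ⟨hlen, h0, hmid, hlast⟩ := h
  have hbound : 2 * d + 2 ≤ q.params.length := by
    rcases hlast with ⟨X, a, b, hq, -⟩ | ⟨rfl, hf, -⟩
    · have := (List.getElem?_eq_some_iff.1 hq).1
      split_ifs at hlenP <;> omega
    · simp [hf] at hlenP; omega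
  refine ⟨hbound, List.ext_getElem?_of_parity (by simp; omega) ?_ ?_ ?_⟩
  · simp [h0, q.params_getElem?_zero]
  · intro i hi
    rw [List.getElem?_take_of_lt (by omega)]
    rcases Nat.lt_or_ge i d with hid | hid
    · obtain ⟨X, a, b, hq, ha, -⟩ := hmid i hid
      rw [ha, (IndRule.params_getElem?_of_rhs hq).1]
    · obtain rfl : i = d := by omega
      rcases hlast with ⟨X, a, b, hq, ha⟩ | ⟨rfl, hf, hout⟩
      · rw [ha, (IndRule.params_getElem?_of_rhs hq).1]
      · rw [hout, IndRule.params_getElem?_outP hf]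
  · intro i hi
    obtain ⟨X, a, b, hq, -, hb⟩ := hmid i (by omega)
    rw [List.getElem?_take_of_lt (by omega), hb, (IndRule.params_getElem?_of_rhs hq).2]

theorem paramsMatch_take_params {q : IndRule NT TM Φ} {d : ℕ}
    (hbound : 2 * d + 2 ≤ q.params.length) : ParamsMatch q d (q.params.take (2 * d + 2)) := by
  have hlenP := q.length_params
  have entry : ∀ n < 2 * d + 2, (q.params.take (2 * d + 2))[n]? = q.params[n]? :=
    fun n hn => List.getElem?_take_of_lt hn
  have rhs_some : ∀ i < q.rhs.length, ∃ X a b, q.rhs[i]? = some (X, a, b) :=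
    fun i hi => ⟨_, _, _, List.getElem?_eq_getElem hi⟩
  refine ⟨by simp; omega, by rw [entry 0 (by omega)]; rfl, fun i hi => ?_, ?_⟩
  · obtain ⟨X, a, b, hq⟩ := rhs_some i (by split_ifs at hlenP <;> omega)
    obtain ⟨ha, hb⟩ := IndRule.params_getElem?_of_rhs hq
    exact ⟨X, a, b, hq, by rw [entry _ (by omega), ha], by rw [entry _ (by omega), hb]⟩
  · rcases Nat.lt_or_ge d q.rhs.length with hd | hd
    · obtain ⟨X, a, b, hq⟩ := rhs_some d hd
      refine Or.inl ⟨X, a, b, hq, ?_⟩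
      rw [entry _ (by omega), (IndRule.params_getElem?_of_rhs hq).1]
    · cases hf : q.fail
      · simp [hf] at hlenP
        obtain rfl : d = q.rhs.length := by omega
        exact Or.inr ⟨rfl, rfl, by rw [entry _ (by omega), IndRule.params_getElem?_outP hf]⟩
      · simp [hf] at hlenP; omega

theorem paramsMatch_iff {q : IndRule NT TM Φ} {d : ℕ} {ρ : List Φ} :
    ParamsMatch q d ρ ↔ 2 * d + 2 ≤ q.params.length ∧ ρ = q.params.take (2 * d + 2) :=
  ⟨ParamsMatch.eq_take_params, fun ⟨hbound, hρ⟩ => hρ ▸ paramsMatch_take_params hbound⟩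

theorem ParamsMatch.getElem?_eq_of_rhs {q : IndRule NT TM Φ} {d : ℕ} {ρ : List Φ}
    (h : ParamsMatch q d ρ) {X : NT ⊕ TM} {a b : Φ} (hq : q.rhs[d]? = some (X, a, b)) :
    ρ[2 * d + 1]? = some a := by
  rcases h.2.2.2 with ⟨X', a', b', hq', ha⟩ | ⟨rfl, -, -⟩
  · simp_all
  · simp at hq

theorem ParamsMatch.getElem?_outP {q : IndRule NT TM Φ} {ρ : List Φ}
    (h : ParamsMatch q q.rhs.length ρ) : ρ[2 * q.rhs.length + 1]? = some q.outP := by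
  rcases h.2.2.2 with ⟨X, a, b, hq, -⟩ | ⟨-, -, hout⟩
  · simp at hq
  · exact hout

namespace InducedBy

variable {r : ParamRule NT TM Φ} {q : IndRule NT TM Φ}

theorem rhs_getElem? (h : InducedBy r q) {i : ℕ} {X : NT ⊕ TM} {a b : Φ}
    (hq : q.rhs[i]? = some (X, a, b)) : r.rhs[i]? = some X := by
  have hi : i < q.rhs.length := (List.getElem?_eq_some_iff.1 hq).1
  rcases h.2.2 with ⟨-, hlen, ρ, -, -, -, hent⟩ |
    ⟨-, h, -, -, hqlen, ρ, -, -, hent, X', a', b', hr, -, hq', -⟩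
  · obtain ⟨X', a', b', hr, -, -, hq'⟩ := hent i (by omega)
    simp_all
  · rcases Nat.lt_or_ge (i + 1) h with hih | hih
    · obtain ⟨X', a', b', hr, -, -, hq'⟩ := hent i hih
      simp_all
    · obtain rfl : i = h - 1 := by omega
      simp_all

theorem length_rhs_of_fail_eq_false (h : InducedBy r q) (hf : q.fail = false) :
    q.rhs.length = r.rhs.length := by
  rcases h.2.2 with ⟨-, hlen, -⟩ | ⟨hf', -⟩
  · exact hlen
  · simp [hf] at hf'

theorem exists_inHull_paramsMatch_s15 (h : InducedBy r q) :
    ∃ d ρ, InHull r.f (d + 1) ρ ∧ ParamsMatch q d ρ ∧ q.params.length ≤ 2 * d + 3 := by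
  have hlenP := q.length_params
  rcases h.2.2 with ⟨hf, hlen, ρ, hhull, h0, hout, hent⟩ |
    ⟨hf, h, h1, -, hqlen, ρ, hhull, h0, hent, X, a, b, -, ha, hq, -⟩
  · refine ⟨r.rhs.length, ρ, hhull,
      ⟨by rw [hhull.1], h0, fun i hi => ?_, Or.inr ⟨hlen.symm, hf, hout⟩⟩,
      by simp [hf] at hlenP; omega⟩
    obtain ⟨X, a, b, -, ha, hb, hq⟩ := hent i hi
    exact ⟨X, a, b, hq, ha, hb⟩
  · obtain ⟨d, rfl⟩ : ∃ d, h = d + 1 := ⟨h - 1, by omega⟩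
    refine ⟨d, ρ, hhull,
      ⟨by rw [hhull.1], h0, fun i hi => ?_, Or.inl ⟨X, a, b, by simpa using hq, ?_⟩⟩,
      by simp [hf] at hlenP; omega⟩
    · obtain ⟨X, a, b, -, ha, hb, hq⟩ := hent i (by omega)
      exact ⟨X, a, b, hq, ha, hb⟩
    · simpa [Nat.mul_succ] using ha

theorem apply_take_params (h : InducedBy r q) {i : ℕ} (hi : 2 * i + 1 < q.params.length) :
    r.f i (q.params.take (2 * i + 1)) = q.params[2 * i + 1]? := by
  obtain ⟨d, ρ, hhull, hpm, hlen⟩ := h.exists_inHull_paramsMatch_s15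
  obtain ⟨-, rfl⟩ := paramsMatch_iff.1 hpm
  have := (hhull.2 i (by omega)).symm
  rwa [List.take_take, min_eq_left (by omega), List.getElem?_take_of_lt (by omega)] at this

theorem exists_paramsMatch_succ (h : InducedBy r q) {d : ℕ} {ρ : List Φ}
    (hpm : ParamsMatch q d ρ) {X : NT ⊕ TM} {α β : Φ}
    (hdot : q.rhs[d]? = some (X, α, β)) (hnf : ¬(q.fail = true ∧ d + 1 = q.rhs.length)) :
    ∃ b, r.f (d + 1) (ρ ++ [β]) = some b ∧ ParamsMatch q (d + 1) (ρ ++ [β] ++ [b]) := by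
  obtain ⟨-, rfl⟩ := paramsMatch_iff.1 hpm
  have hd : d < q.rhs.length := (List.getElem?_eq_some_iff.1 hdot).1
  have hlt : 2 * (d + 1) + 1 < q.params.length := by
    have hlenP := q.length_params
    cases hf : q.fail <;> simp [hf] at hlenP hnf <;> omega
  obtain ⟨b, hb⟩ : ∃ b, q.params[2 * (d + 1) + 1]? = some b :=
    ⟨_, List.getElem?_eq_getElem hlt⟩
  have hβ : q.params.take (2 * d + 2) ++ [β] = q.params.take (2 * (d + 1) + 1) := by
    rw [show 2 * (d + 1) + 1 = 2 * d + 2 + 1 by ring, @List.take_add_one _ q.params (2 * d + 2),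
      (IndRule.params_getElem?_of_rhs hdot).2, Option.toList_some]
  have hb' : q.params.take (2 * (d + 1) + 1) ++ [b] = q.params.take (2 * (d + 1) + 2) := by
    rw [@List.take_add_one _ q.params (2 * (d + 1) + 1), hb, Option.toList_some]
  exact ⟨b, by rw [hβ, h.apply_take_params hlt, hb],
    paramsMatch_iff.2 ⟨by omega, by rw [hβ, hb']⟩⟩

end InducedBy

theorem exists_inducedBy_of_inHull {r : ParamRule NT TM Φ} {ρ : List Φ}
    (h : InHull r.f (r.rhs.length + 1) ρ) :
    ∃ q : IndRule NT TM Φ,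
      InducedBy r q ∧ q.fail = false ∧ ParamsMatch q r.rhs.length ρ := by
  have hlen := h.1
  set n := r.rhs.length
  let q : IndRule NT TM Φ := ⟨false, r.lhs, ρ[0], ρ[2 * n + 1],
    List.ofFn fun i : Fin n => (r.rhs[i], ρ[2 * (i : ℕ) + 1], ρ[2 * (i : ℕ) + 2]), false⟩
  have hq : ∀ i (hi : i < n), q.rhs[i]? = some (r.rhs[i], ρ[2 * i + 1], ρ[2 * i + 2]) := by
    intro i hi
    simp [q, hi]
  have h0 : ρ[0]? = some q.inP := List.getElem?_eq_getElem _
  have hout : ρ[2 * n + 1]? = some q.outP := List.getElem?_eq_getElem _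
  refine ⟨q, ⟨rfl, rfl, Or.inl ⟨rfl, by simp [q, n], ρ, h, h0, hout, fun i hi => ?_⟩⟩,
    rfl, ⟨hlen, h0, fun i hi => ?_, Or.inr ⟨by simp [q, n], rfl, hout⟩⟩⟩
  · exact ⟨_, _, _, List.getElem?_eq_getElem hi, List.getElem?_eq_getElem _,
      List.getElem?_eq_getElem _, hq i hi⟩
  · exact ⟨_, _, _, hq i hi, List.getElem?_eq_getElem _, List.getElem?_eq_getElem _⟩

theorem PItem.Valid.exists_memInduced_complete {y : PItem NT TM Φ} (hy : y.Valid)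
    (hd : y.d = y.r.rhs.length) :
    ∃ c : EItem NT TM Φ, MemInduced y c ∧ c.rule.fail = false ∧ c.d = c.rule.rhs.length := by
  obtain ⟨q, hind, hf, hpm⟩ := exists_inducedBy_of_inHull (hd ▸ hy.2)
  exact ⟨⟨q, y.d, y.i, y.j⟩, ⟨hind, rfl, rfl, rfl, by simp [hf], hd ▸ hpm⟩, hf,
    by simp [hd, hind.length_rhs_of_fail_eq_false hf]⟩

namespace MemInduced

theorem of_complete {y : PItem NT TM Φ} {c : EItem NT TM Φ} (h : MemInduced y c)
    (hf : c.rule.fail = false) (hd : c.d = c.rule.rhs.length) :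
    y.d = y.r.rhs.length ∧ y.ρ[0]? = some c.rule.inP ∧
      y.ρ[2 * y.d + 1]? = some c.rule.outP := by
  obtain ⟨hind, hyd, -, -, -, hpm⟩ := h
  have hlen := hind.length_rhs_of_fail_eq_false hf
  have hyd' : y.d = c.rule.rhs.length := by omega
  refine ⟨by omega, hpm.2.1, ?_⟩
  rw [hyd'] at hpm ⊢
  exact hpm.getElem?_outP

theorem exists_advance {x : PItem NT TM Φ} {y : EItem NT TM Φ} (h : MemInduced x y)
    {X : NT ⊕ TM} {α β : Φ} (hdot : y.rule.rhs[y.d]? = some (X, α, β))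
    (hnf : ¬(y.rule.fail = true ∧ y.d + 1 = y.rule.rhs.length)) (k : ℕ) :
    ∃ b, x.r.f (x.d + 1) (x.ρ ++ [β]) = some b ∧
      MemInduced ⟨x.r, x.d + 1, x.i, k, x.ρ ++ [β] ++ [b]⟩ ⟨y.rule, y.d + 1, y.i, k⟩ := by
  obtain ⟨hind, hd, hi, -, -, hpm⟩ := h
  rw [hd] at hdot hnf
  have hlt := (List.getElem?_eq_some_iff.1 hdot).1
  obtain ⟨b, hb, hpm'⟩ := hind.exists_paramsMatch_succ hpm hdot hnf
  refine ⟨b, hb, hind, by simp [hd], hi, rfl, fun hf => ?_, hpm'⟩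
  have : x.d + 1 ≠ y.rule.rhs.length := fun he => hnf ⟨hf, he⟩
  dsimp only
  omega

theorem of_append {r : ParamRule NT TM Φ} {d i j k : ℕ} {ρ : List Φ} {β b : Φ}
    {z : EItem NT TM Φ} (h : MemInduced ⟨r, d + 1, i, k, ρ ++ [β] ++ [b]⟩ z) :
    MemInduced ⟨r, d, i, j, ρ⟩ ⟨z.rule, d, i, j⟩ ∧
      ∃ X a, z.rule.rhs[d]? = some (X, a, β) ∧ ρ[2 * d + 1]? = some a := by
  obtain ⟨hind, -, -, -, hfail, hpm⟩ := h
  dsimp only at hind hfail hpm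
  have hρ : ρ.length = 2 * d + 2 := by have := hpm.1; simp at this; omega
  obtain ⟨hle, heq⟩ := paramsMatch_iff.1 hpm
  have hprefix : ρ = z.rule.params.take (2 * d + 2) := by
    have := congrArg (List.take (2 * d + 2)) heq
    simpa [List.take_take, hρ] using this
  obtain ⟨X, a, b', hq, ha, hb'⟩ := hpm.2.2.1 d (Nat.lt_succ_self d)
  have hbound : 2 * d + 2 ≤ z.rule.params.length := by omega
  refine ⟨⟨hind, rfl, rfl, rfl, fun hf => by have := hfail hf; dsimp only; omega,
    paramsMatch_iff.2 ⟨hbound, hprefix⟩⟩, X, a, ?_, ?_⟩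
  · rw [List.getElem?_append_left (by simp; omega), List.getElem?_append_right (by omega),
      hρ] at hb'
    simp_all
  · rwa [List.getElem?_append_left (by simp; omega), List.getElem?_append_left (by omega)] at ha

end MemInduced

variable {I : Set (PItem NT TM Φ)} {I' : Set (EItem NT TM Φ)}

theorem Sim.mem_of_memInduced (hsim : Sim I I') {x : PItem NT TM Φ} {y : EItem NT TM Φ}
    (hx : x ∈ I) (h : MemInduced x y) : y ∈ I' :=
  (hsim.subset ⟨x, hx, h⟩ : y ∈ NormItems I').1

theorem Sim.exists_memInduced (hsim : Sim I I') {y : EItem NT TM Φ} (hy : y ∈ I')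
    (htop : y.rule.isTop = false) (hnf : ¬(y.rule.fail = true ∧ y.d = y.rule.rhs.length)) :
    ∃ x ∈ I, MemInduced x y :=
  hsim.symm.subset ⟨hy, htop, hnf⟩

theorem inducedSet_complete_subset (k : ℕ) (hI : ∀ x ∈ I, x.Valid) (hsim : Sim I I') :
    InducedSet (Complete k I) ⊆ NormItems (Complete' k I') := by
  rintro ⟨q, zd, zi, zj⟩
    ⟨z, hz | ⟨x, hx, y, hy, M, hdot, hlhs, hyd, hyi, hyj, hio, ξ, b, hξ, hb, rfl⟩, hz'⟩
  · obtain ⟨hz'I, hnorm⟩ : _ ∈ NormItems I' := hsim.subset ⟨z, hz, hz'⟩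
    exact ⟨Or.inl hz'I, hnorm⟩
  have ⟨hind, hzd, hzi, hzj, hfail, _⟩ := hz'
  dsimp only at hind hzd hzi hzj hfail
  subst hzd hzi hzj
  obtain ⟨hx', X, a, hq, ha⟩ := MemInduced.of_append (j := x.j) hz'
  obtain ⟨c, hc, hcf, hcd⟩ := (hI y hy).exists_memInduced_complete hyd
  obtain ⟨-, hc0, hcout⟩ := hc.of_complete hcf hcd
  have hX : .inl M = X := by simpa [hdot] using hind.rhs_getElem? hq
  refine ⟨Or.inr ⟨_, hsim.mem_of_memInduced hx hx', c, hsim.mem_of_memInduced hy hc, M, a, ξ,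
    by simpa [← hX] using hq, hc.1.1, hcf, hc.1.2.1.trans hlhs, ?_, ?_, hcd,
    hc.2.2.1.trans hyi, hc.2.2.2.1.trans hyj, rfl⟩, hind.1, fun ⟨hf, he⟩ => ?_⟩
  · simpa [ha, hc0] using hio.symm
  · simpa [hξ] using hcout.symm
  · have := hfail hf
    dsimp only at this he
    omega

theorem normItems_complete'_subset (k : ℕ) (hsim : Sim I I') :
    NormItems (Complete' k I') ⊆ InducedSet (Complete k I) := by
  rintro z' ⟨hz' | ⟨y', hy', c, hc, M, α, β, hdot, hctop, hcf, hclhs, hcin, hcout, hcd, hci,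
    hcj, rfl⟩, htop, hnf⟩
  · obtain ⟨x, hx, h⟩ := hsim.exists_memInduced hz' htop hnf
    exact ⟨x, Or.inl hx, h⟩
  have hd : y'.d < y'.rule.rhs.length := (List.getElem?_eq_some_iff.1 hdot).1
  obtain ⟨x, hx, hxy⟩ := hsim.exists_memInduced hy' htop (by omega)
  obtain ⟨y, hy, hyc⟩ := hsim.exists_memInduced hc hctop (by simp [hcf])
  obtain ⟨hyd, hy0, hyout⟩ := hyc.of_complete hcf hcd
  obtain ⟨b, hb, hz⟩ := hxy.exists_advance hdot hnf k
  have hdot' : y'.rule.rhs[x.d]? = some (.inl M, α, β) := hxy.2.1 ▸ hdot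
  refine ⟨_, Or.inr ⟨x, hx, y, hy, M, hxy.1.rhs_getElem? hdot', hyc.1.2.1.symm.trans hclhs,
    hyd, ?_, hyc.2.2.2.1.symm.trans hcj, ?_, β, b, by rw [hyout, hcout], hb, rfl⟩, hz⟩
  · rw [← hyc.2.2.1, hci, hxy.2.2.2.1]
  · rw [hxy.2.2.2.2.2.getElem?_eq_of_rhs hdot', hy0, hcin]

end

/-- If `I ∼ I'` then `Complete k I ∼ Complete' k I'`. -/
theorem complete_simulation {NT TM Φ : Type}
    (k : ℕ) (I : Set (PItem NT TM Φ)) (I' : Set (EItem NT TM Φ))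
    (hI : ∀ x ∈ I, x.Valid) (hsim : Sim I I') :
    Sim (Complete k I) (Complete' k I') :=
  (inducedSet_complete_subset k hI hsim).antisymm (normItems_complete'_subset k hsim)
end

section
/- Init ∼ Predict' 0 Init', i.e., the induced item set of PELLA's initial parameterized item set equals the normalized result of applying ELLA's prediction at position 0 to its initial item set on the induced grammar. Concretely, Norm(Predict' 0 Init') = { (S^{φ_start}_β → • w, 0, 0) | (S^{φ_start}_β → w) ∈ ⟦R⟧ } and this set equals ⟦Init⟧. -/
/-- Standard Earley prediction at position `k` on the induced grammar of `R`. -/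
def Predict' {NT TM Φ : Type} (R : Set (ParamRule NT TM Φ)) (k : ℕ)
    (I' : Set (EItem NT TM Φ)) : Set (EItem NT TM Φ) :=
  I' ∪ { y | ∃ y₀ ∈ I', y₀.j = k ∧ ∃ (M : NT) (α β : Φ),
      y₀.rule.rhs[y₀.d]? = some (Sum.inl M, α, β) ∧
      (∃ r ∈ R, InducedBy r y.rule) ∧ y.rule.lhs = M ∧ y.rule.inP = α ∧
      y.rule.outP = β ∧ y.d = 0 ∧ y.i = k ∧ y.j = k }

/-- PELLA's initial item set. -/
def Init {NT TM Φ : Type} (R : Set (ParamRule NT TM Φ)) (S : NT) (φs : Φ) :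
    Set (PItem NT TM Φ) :=
  { z | z.r ∈ R ∧ z.r.lhs = S ∧ z.d = 0 ∧ z.i = 0 ∧ z.j = 0 ∧
    ∃ β : Φ, z.r.f 0 [φs] = some β ∧ z.ρ = [φs, β] }

/-- The induced grammar's start rule `⊤ → S^{φs}_β`. -/
def TopRule {NT TM Φ : Type} (S : NT) (φs β : Φ) : IndRule NT TM Φ :=
  ⟨true, S, φs, β, [(Sum.inl S, φs, β)], false⟩

/-- ELLA's initial item set on the induced grammar. -/
def Init' {NT TM Φ : Type} (S : NT) (φs : Φ) : Set (EItem NT TM Φ) :=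
  { y | ∃ β : Φ, y.rule = TopRule S φs β ∧ y.d = 0 ∧ y.i = 0 ∧ y.j = 0 }

def startItems {NT TM Φ : Type} (R : Set (ParamRule NT TM Φ)) (S : NT) (φs : Φ) :
    Set (EItem NT TM Φ) :=
  { y | ∃ q : IndRule NT TM Φ, (∃ r ∈ R, InducedBy r q) ∧
      q.lhs = S ∧ q.inP = φs ∧ y = ⟨q, 0, 0, 0⟩ }

section

variable {NT TM Φ : Type}

theorem InHull.getElem?_one {f : ℕ → List Φ → Option Φ} {u : ℕ} {ρ : List Φ} {p : Φ}
    (hρ : InHull f u ρ) (hu : 0 < u) (h0 : ρ[0]? = some p) : ρ[1]? = f 0 [p] := by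
  have htake : ρ.take 1 = [p] := by
    cases ρ with
    | nil => simp at h0
    | cons x t => simp_all
  simpa [htake] using hρ.2 0 hu

theorem InducedBy.one_le_length_of_fail {r : ParamRule NT TM Φ} {q : IndRule NT TM Φ}
    (hq : InducedBy r q) (hf : q.fail = true) : 1 ≤ q.rhs.length := by
  rcases hq.2.2 with ⟨hf0, _⟩ | ⟨_, h, h1, _, hlen, _⟩
  · simp [hf0] at hf
  · omega

theorem paramsMatch_zero_iff {q : IndRule NT TM Φ} {p a : Φ} :
    ParamsMatch q 0 [p, a] ↔ p = q.inP ∧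
      ((∃ X b, q.rhs[0]? = some (X, a, b)) ∨
        (q.rhs = [] ∧ q.fail = false ∧ a = q.outP)) := by
  simp [ParamsMatch, eq_comm (a := 0), List.length_eq_zero_iff]

theorem InducedBy.exists_paramsMatch_zero {r : ParamRule NT TM Φ} {q : IndRule NT TM Φ}
    (hq : InducedBy r q) : ∃ a, r.f 0 [q.inP] = some a ∧ ParamsMatch q 0 [q.inP, a] := by
  rcases hq.2.2 with ⟨hf, hlen, ρ, hρ, hρ0, hρout, hsyms⟩ |
      ⟨_, h, h1, _, _, ρ, hρ, hρ0, hsyms, X, a, b, _, hρa, hqa, _⟩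
  · have h01 := hρ.getElem?_one (Nat.succ_pos _) hρ0
    rcases Nat.eq_zero_or_pos r.rhs.length with hr0 | hr0
    · refine ⟨q.outP, ?_, paramsMatch_zero_iff.2 ⟨rfl, Or.inr ⟨?_, hf, rfl⟩⟩⟩
      · rw [← h01, ← hρout, hr0]
      · rw [← List.length_eq_zero_iff, hlen, hr0]
    · obtain ⟨X, a, b, _, hρ1, _, hq0⟩ := hsyms 0 hr0
      exact ⟨a, h01 ▸ hρ1, paramsMatch_zero_iff.2 ⟨rfl, Or.inl ⟨X, b, hq0⟩⟩⟩
  · have h01 := hρ.getElem?_one h1 hρ0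
    rcases Nat.lt_or_ge 1 h with hh | hh
    · obtain ⟨X, a, b, _, hρ1, _, hq0⟩ := hsyms 0 hh
      exact ⟨a, h01 ▸ hρ1, paramsMatch_zero_iff.2 ⟨rfl, Or.inl ⟨X, b, hq0⟩⟩⟩
    · obtain rfl : h = 1 := by omega
      exact ⟨a, h01 ▸ hρa, paramsMatch_zero_iff.2 ⟨rfl, Or.inl ⟨X, b, hqa⟩⟩⟩

theorem normItems_predict_init' (R : Set (ParamRule NT TM Φ)) (S : NT) (φs : Φ) :
    NormItems (Predict' R 0 (Init' (TM := TM) S φs)) = startItems R S φs := by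
  ext ⟨q, d, i, j⟩
  constructor
  · rintro ⟨hinit | ⟨y₀, ⟨β, hy₀, hd₀, -⟩, -, M, α, β', hsym, hR, hlhs, hinP, -, hd, hi, hj⟩,
      htop, -⟩
    · obtain ⟨β, hq, -⟩ := hinit
      change q = TopRule S φs β at hq
      simp [hq, TopRule] at htop
    · simp only [hy₀, hd₀, TopRule, List.getElem?_cons_zero, Option.some.injEq,
        Prod.mk.injEq, Sum.inl.injEq] at hsym
      exact ⟨q, hR, hlhs ▸ hsym.1.symm, hinP ▸ hsym.2.1.symm, by simp_all⟩
  · rintro ⟨q, ⟨r, hr, hq⟩, hlhs, hinP, hy⟩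
    simp only [EItem.mk.injEq] at hy
    obtain ⟨rfl, rfl, rfl, rfl⟩ := hy
    refine ⟨Or.inr ⟨⟨TopRule S φs q.outP, 0, 0, 0⟩, ⟨q.outP, rfl, rfl, rfl, rfl⟩, rfl,
      S, φs, q.outP, by simp [TopRule], ⟨r, hr, hq⟩, hlhs, hinP, rfl, rfl, rfl, rfl⟩,
      hq.1, ?_⟩
    rintro ⟨hf, hlen⟩
    have := hq.one_le_length_of_fail hf
    simp only at hlen
    omega

theorem inducedSet_init (R : Set (ParamRule NT TM Φ)) (S : NT) (φs : Φ) :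
    InducedSet (Init R S φs) = startItems (TM := TM) R S φs := by
  ext ⟨q, d, i, j⟩
  constructor
  · rintro ⟨⟨r, _, _, _, ρ⟩, ⟨hr, hlhs, rfl, rfl, rfl, β, -, rfl⟩, hq, hd, hi, hj, -, hmatch⟩
    exact ⟨q, ⟨r, hr, hq⟩, hq.2.1.trans hlhs, (paramsMatch_zero_iff.1 hmatch).1.symm,
      by simp_all⟩
  · rintro ⟨q, ⟨r, hr, hq⟩, hlhs, rfl, hy⟩
    simp only [EItem.mk.injEq] at hy
    obtain ⟨rfl, rfl, rfl, rfl⟩ := hy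
    obtain ⟨a, ha, hmatch⟩ := hq.exists_paramsMatch_zero
    exact ⟨⟨r, 0, 0, 0, [q.inP, a]⟩, ⟨hr, hq.2.1 ▸ hlhs, rfl, rfl, rfl, a, ha, rfl⟩,
      hq, rfl, rfl, rfl, hq.one_le_length_of_fail, hmatch⟩

end

/-- `Init ∼ Predict' 0 Init'`; concretely,
`Norm(Predict' 0 Init') = {(S^{φs}_β → • w, 0, 0) | (S^{φs}_β → w) ∈ ⟦R⟧}`
and this set equals `⟦Init⟧`. -/
theorem init_simulation {NT TM Φ : Type}
    (R : Set (ParamRule NT TM Φ)) (S : NT) (φs : Φ) :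
    NormItems (Predict' R 0 (Init' (TM := TM) S φs)) =
      { y : EItem NT TM Φ | ∃ q : IndRule NT TM Φ, (∃ r ∈ R, InducedBy r q) ∧
          q.lhs = S ∧ q.inP = φs ∧ y = ⟨q, 0, 0, 0⟩ } ∧
    InducedSet (Init R S φs) = NormItems (Predict' R 0 (Init' (TM := TM) S φs)) :=
  ⟨normItems_predict_init' R S φs,
    (inducedSet_init R S φs).trans (normItems_predict_init' R S φs).symm⟩
end
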